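/- arXiv:2001.09264 — 4 statements merged into one kernel-verified Lean document; each statement's English description precedes it below -/
import Mathlib

section
/- For every α ≥ 0, Q₁(α, α) = (1/2) · (1 + e^{−α²} I₀(α²)). -/
open MeasureTheory Real

/-- The zeroth-order modified Bessel function of the first kind,
`I₀(x) = ∑_{i=0}^∞ (x/2)^{2i} / (i!)²`. -/
noncomputable def besselI0 (x : ℝ) : ℝ :=
  ∑' i : ℕ, (x / 2) ^ (2 * i) / ((Nat.factorial i : ℝ)) ^ 2

/-- The first-order Marcum Q-function,
`Q₁(α,β) = ∫_β^∞ x e^{−(x²+α²)/2} I₀(αx) dx`. -/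
noncomputable def marcumQ1 (α β : ℝ) : ℝ :=
  ∫ x in Set.Ioi β, x * Real.exp (-((x ^ 2 + α ^ 2) / 2)) * besselI0 (α * x)

open Filter Topology Finset
open scoped Nat

/-! Expanding `I₀` into its power series gives
`x e^{-(x²+α²)/2} I₀(αx) = ∑ᵢ pᵢ(α²/2) · x pᵢ(x²/2)` with the Poisson weights
`pᵢ(t) = e^{-t} tⁱ / i!`, and `x pᵢ(x²/2)` is minus the derivative in `x` of the Poisson
distribution function `Fᵢ(x²/2) = ∑_{k ≤ i} p_k(x²/2)`. Integrating term by term, for `β ≥ 0`,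
`Q₁(α, β) = ∑ᵢ pᵢ(α²/2) Fᵢ(β²/2)`: the probability that `M ≤ N` for independent Poisson variables
`N ~ Po(α²/2)` and `M ~ Po(β²/2)`. When `α = β` the two are exchangeable, so this probability is
`(1 + P(M = N)) / 2`, and `P(M = N) = ∑ᵢ pᵢ(α²/2)² = e^{-α²} I₀(α²)`. -/

noncomputable def poissonWeight (t : ℝ) (k : ℕ) : ℝ := t ^ k / k ! * exp (-t)

noncomputable def poissonCDF (t : ℝ) (n : ℕ) : ℝ := ∑ k ∈ range (n + 1), poissonWeight t k

lemma poissonWeight_nonneg {t : ℝ} (ht : 0 ≤ t) (k : ℕ) : 0 ≤ poissonWeight t k := by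
  unfold poissonWeight; positivity

lemma hasSum_poissonWeight (t : ℝ) : HasSum (poissonWeight t) 1 := by
  have := (NormedSpace.expSeries_div_hasSum_exp t).mul_right (exp (-t))
  rwa [← Real.exp_eq_exp_ℝ, ← exp_add, add_neg_cancel, exp_zero] at this

lemma poissonWeight_le_one {t : ℝ} (ht : 0 ≤ t) (k : ℕ) : poissonWeight t k ≤ 1 :=
  le_hasSum (hasSum_poissonWeight t) k fun j _ => poissonWeight_nonneg ht j

lemma hasDerivAt_poissonWeight_zero (t : ℝ) :
    HasDerivAt (poissonWeight · 0) (-poissonWeight t 0) t := by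
  simpa [poissonWeight] using (hasDerivAt_neg t).exp

lemma hasDerivAt_poissonWeight_succ (t : ℝ) (k : ℕ) :
    HasDerivAt (poissonWeight · (k + 1)) (poissonWeight t k - poissonWeight t (k + 1)) t := by
  have := ((hasDerivAt_pow (k + 1) t).div_const ((k + 1)! : ℝ)).mul (hasDerivAt_neg t).exp
  refine this.congr_deriv ?_
  simp only [poissonWeight, Nat.factorial_succ, Nat.cast_mul, Nat.cast_succ, add_tsub_cancel_right]
  field_simp
  ring

lemma hasDerivAt_poissonCDF (t : ℝ) (n : ℕ) :
    HasDerivAt (poissonCDF · n) (-poissonWeight t n) t := by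
  induction n with
  | zero => simpa [poissonCDF] using hasDerivAt_poissonWeight_zero t
  | succ n ih =>
    simp only [poissonCDF, sum_range_succ _ (n + 1)] at ih ⊢
    exact (ih.add (hasDerivAt_poissonWeight_succ t n)).congr_deriv (by ring)

lemma tendsto_poissonCDF_atTop (n : ℕ) : Tendsto (poissonCDF · n) atTop (𝓝 0) := by
  have h := tendsto_finsetSum (range (n + 1)) fun k _ =>
    (tendsto_pow_mul_exp_neg_atTop_nhds_zero k).div_const (k ! : ℝ)
  simp only [zero_div, sum_const_zero] at h
  refine h.congr fun t => sum_congr rfl fun k _ => ?_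
  simp only [poissonWeight]; ring

lemma poissonCDF_nonneg {t : ℝ} (ht : 0 ≤ t) (n : ℕ) : 0 ≤ poissonCDF t n :=
  sum_nonneg fun k _ => poissonWeight_nonneg ht k

lemma poissonCDF_le_one {t : ℝ} (ht : 0 ≤ t) (n : ℕ) : poissonCDF t n ≤ 1 :=
  sum_le_hasSum _ (fun k _ => poissonWeight_nonneg ht k) (hasSum_poissonWeight t)

lemma mul_poissonWeight_sq_half_nonneg {x : ℝ} (hx : 0 ≤ x) (n : ℕ) :
    0 ≤ x * poissonWeight (x ^ 2 / 2) n :=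
  mul_nonneg hx (poissonWeight_nonneg (by positivity) n)

lemma hasDerivAt_poissonCDF_sq_half (x : ℝ) (n : ℕ) :
    HasDerivAt (fun x => poissonCDF (x ^ 2 / 2) n) (-(x * poissonWeight (x ^ 2 / 2) n)) x := by
  have hsq : HasDerivAt (fun x : ℝ => x ^ 2 / 2) x x := by
    simpa using (hasDerivAt_pow 2 x).div_const 2
  exact ((hasDerivAt_poissonCDF _ n).comp x hsq).congr_deriv (by ring)

lemma tendsto_poissonCDF_sq_half_atTop (n : ℕ) :
    Tendsto (fun x : ℝ => poissonCDF (x ^ 2 / 2) n) atTop (𝓝 0) :=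
  (tendsto_poissonCDF_atTop n).comp <|
    (tendsto_pow_atTop two_ne_zero).atTop_div_const two_pos

lemma integrableOn_mul_poissonWeight_sq_half {c : ℝ} (hc : 0 ≤ c) (n : ℕ) :
    IntegrableOn (fun x => x * poissonWeight (x ^ 2 / 2) n) (Set.Ioi c) := by
  have h := integrableOn_Ioi_deriv_of_nonpos' (fun x _ => hasDerivAt_poissonCDF_sq_half x n)
    (fun x hx => neg_nonpos.2 <| mul_poissonWeight_sq_half_nonneg (hc.trans hx.out.le) n)
    (tendsto_poissonCDF_sq_half_atTop n)
  simpa using h.neg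

lemma integral_Ioi_mul_poissonWeight_sq_half {c : ℝ} (hc : 0 ≤ c) (n : ℕ) :
    ∫ x in Set.Ioi c, x * poissonWeight (x ^ 2 / 2) n = poissonCDF (c ^ 2 / 2) n := by
  have h := integral_Ioi_of_hasDerivAt_of_nonpos' (fun x _ => hasDerivAt_poissonCDF_sq_half x n)
    (fun x hx => neg_nonpos.2 <| mul_poissonWeight_sq_half_nonneg (hc.trans hx.out.le) n)
    (tendsto_poissonCDF_sq_half_atTop n)
  rw [integral_neg, zero_sub, neg_inj] at h
  exact h

lemma exp_mul_besselI0_eq_tsum (a b : ℝ) :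
    exp (-((a ^ 2 + b ^ 2) / 2)) * besselI0 (a * b) =
      ∑' i, poissonWeight (a ^ 2 / 2) i * poissonWeight (b ^ 2 / 2) i := by
  rw [besselI0, ← tsum_mul_left]
  refine tsum_congr fun i => ?_
  rw [show -((a ^ 2 + b ^ 2) / 2) = -(a ^ 2 / 2) + -(b ^ 2 / 2) by ring, exp_add, pow_mul,
    show (a * b / 2) ^ 2 = a ^ 2 / 2 * (b ^ 2 / 2) by ring, mul_pow, poissonWeight, poissonWeight]
  ring

lemma hasSum_poissonWeight_mul_poissonWeight (a b : ℝ) :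
    HasSum (fun i => poissonWeight (a ^ 2 / 2) i * poissonWeight (b ^ 2 / 2) i)
      (exp (-((a ^ 2 + b ^ 2) / 2)) * besselI0 (a * b)) := by
  rw [exp_mul_besselI0_eq_tsum]
  refine (Summable.of_nonneg_of_le (fun i => ?_) (fun i => ?_)
    (hasSum_poissonWeight (a ^ 2 / 2)).summable).hasSum
  · exact mul_nonneg (poissonWeight_nonneg (by positivity) i)
      (poissonWeight_nonneg (by positivity) i)
  · exact mul_le_of_le_one_right (poissonWeight_nonneg (by positivity) i)
      (poissonWeight_le_one (by positivity) i)

lemma two_mul_sum_range_mul_sum_range_succ {R : Type*} [CommRing R] (a : ℕ → R) (N : ℕ) :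
    2 * ∑ i ∈ range N, a i * ∑ k ∈ range (i + 1), a k =
      (∑ i ∈ range N, a i) ^ 2 + ∑ i ∈ range N, a i ^ 2 := by
  induction N with
  | zero => simp
  | succ N ih =>
    simp only [sum_range_succ _ N] at *
    linear_combination ih

lemma hasSum_mul_sum_range_succ {a : ℕ → ℝ} {A B : ℝ} (h0 : ∀ i, 0 ≤ a i) (ha : HasSum a A)
    (ha2 : HasSum (fun i => a i ^ 2) B) :
    HasSum (fun i => a i * ∑ k ∈ range (i + 1), a k) ((A ^ 2 + B) / 2) := by
  refine (hasSum_iff_tendsto_nat_of_nonneg (fun i => mul_nonneg (h0 i)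
    (sum_nonneg fun k _ => h0 k)) _).2 ?_
  refine ((ha.tendsto_sum_nat.pow 2).add ha2.tendsto_sum_nat).div_const 2 |>.congr fun N => ?_
  rw [← two_mul_sum_range_mul_sum_range_succ]
  ring

lemma marcumQ1_eq_tsum (α : ℝ) {β : ℝ} (hβ : 0 ≤ β) :
    marcumQ1 α β = ∑' i, poissonWeight (α ^ 2 / 2) i * poissonCDF (β ^ 2 / 2) i := by
  set w := poissonWeight (α ^ 2 / 2)
  have hw : ∀ i, 0 ≤ w i := poissonWeight_nonneg (by positivity)
  have hexpand : ∀ x, x * exp (-((x ^ 2 + α ^ 2) / 2)) * besselI0 (α * x) =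
      ∑' i, w i * (x * poissonWeight (x ^ 2 / 2) i) := by
    intro x
    rw [mul_assoc, mul_comm α x, exp_mul_besselI0_eq_tsum, ← tsum_mul_left]
    exact tsum_congr fun i => by ring
  have hint : ∀ i, IntegrableOn (fun x => w i * (x * poissonWeight (x ^ 2 / 2) i)) (Set.Ioi β) :=
    fun i => (integrableOn_mul_poissonWeight_sq_half hβ i).const_mul (w i)
  have hval : ∀ i, ∫ x in Set.Ioi β, w i * (x * poissonWeight (x ^ 2 / 2) i) =
      w i * poissonCDF (β ^ 2 / 2) i := fun i => by
    rw [integral_const_mul, integral_Ioi_mul_poissonWeight_sq_half hβ]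
  have hnorm : ∀ i, ∫ x in Set.Ioi β, ‖w i * (x * poissonWeight (x ^ 2 / 2) i)‖ =
      w i * poissonCDF (β ^ 2 / 2) i := fun i => by
    rw [← hval]
    refine setIntegral_congr_fun measurableSet_Ioi fun x hx => Real.norm_of_nonneg ?_
    exact mul_nonneg (hw i) (mul_poissonWeight_sq_half_nonneg (hβ.trans hx.out.le) i)
  have hsum : Summable fun i => w i * poissonCDF (β ^ 2 / 2) i :=
    Summable.of_nonneg_of_le (fun i => mul_nonneg (hw i) (poissonCDF_nonneg (by positivity) i))
      (fun i => mul_le_of_le_one_right (hw i) (poissonCDF_le_one (by positivity) i))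
      (hasSum_poissonWeight _).summable
  rw [marcumQ1]
  simp_rw [hexpand]
  rw [← integral_tsum_of_summable_integral_norm hint (by simpa only [hnorm] using hsum)]
  exact tsum_congr hval

/-- For every `α ≥ 0`, `Q₁(α,α) = (1/2)(1 + e^{−α²} I₀(α²))`. -/
theorem marcumQ1_diag (α : ℝ) (hα : 0 ≤ α) :
    marcumQ1 α α = (1 / 2) * (1 + Real.exp (-α ^ 2) * besselI0 (α ^ 2)) := by
  have hsq : HasSum (fun i => poissonWeight (α ^ 2 / 2) i ^ 2)
      (exp (-α ^ 2) * besselI0 (α ^ 2)) := by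
    convert hasSum_poissonWeight_mul_poissonWeight α α using 1
    · simp only [sq]
    · ring_nf
  have hdiag := hasSum_mul_sum_range_succ (poissonWeight_nonneg (by positivity))
    (hasSum_poissonWeight (α ^ 2 / 2)) hsq
  rw [marcumQ1_eq_tsum α hα]
  simp only [poissonCDF, hdiag.tsum_eq]
  ring
end

section
/- Fix α > 0, n > 0 and a real m ≥ 0. Let c̆₁ = α − (√(2π)/2)·(1 − 1/√(2πα²)) and c̆₂ = c̆₁ + √(2π), and let ℓ : ℝ → ℝ be the piecewise function with ℓ(x) = 0 for x < c̆₁, ℓ(x) = (1/√(2π))(x − α) + (1/2)(1 − 1/√(2πα²)) for c̆₁ ≤ x ≤ c̆₂, and ℓ(x) = 1 for x > c̆₂. Then for every ρ with 0 ≤ ρ < c̆₂, ∫_ρ^∞ e^{−nx} x^m ℓ(x) dx = Γ(m+1, n c̆₂) n^{−m−1} + (−α/√(2π) + (1/2)(1 − 1/√(2πα²))) · n^{−m−1} · (Γ(m+1, n·max(c̆₁, ρ)) − Γ(m+1, n c̆₂)) + (n^{−m−2}/√(2π)) · (Γ(m+2, n·max(c̆₁, ρ)) − Γ(m+2, n c̆₂)),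 where Γ(s, x) = ∫_x^∞ t^{s−1} e^{−t} dt is the upper incomplete gamma function. -/
open MeasureTheory Real

/-- The upper incomplete gamma function `Γ(s,x) = ∫_x^∞ t^{s−1} e^{−t} dt`. -/
noncomputable def gammaInc (s x : ℝ) : ℝ :=
  ∫ t in Set.Ioi x, t ^ (s - 1) * Real.exp (-t)

/-!
On `(ρ, ∞)` the approximant `ℓ` vanishes up to `max c̆₁ ρ`, is affine, `x ↦ (x − c̆₁)/√(2π)`, up
to `c̆₂`, and equals `1` beyond. The integral therefore splits into integrals of
`e^{−nx} x^s` (with `s = m` and, for the affine part, `s = m + 1`) over a ray or a bounded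
interval, and the substitution `t = n x` turns each of them into an incomplete gamma value or a
difference of two.
-/

open Set

section GammaWeight

variable {n s a b : ℝ}

theorem integrableOn_exp_neg_mul_mul_rpow_Ioi (hn : 0 < n) (hs : -1 < s) (ha : 0 ≤ a) :
    IntegrableOn (fun x => exp (-(n * x)) * x ^ s) (Ioi a) := by
  have hΓ : IntegrableOn (fun t => exp (-t) * t ^ s) (Ioi (n * a)) := by
    simpa using (GammaIntegral_convergent (s := s + 1) (by linarith)).mono_set
      (Ioi_subset_Ioi (by positivity))
  refine IntegrableOn.congr_fun (((integrableOn_Ioi_comp_mul_left_iff _ a hn).2 hΓ).const_mul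
    (n ^ s)⁻¹) (fun x hx => ?_) measurableSet_Ioi
  rw [mul_rpow hn.le (ha.trans (le_of_lt hx))]
  field_simp

theorem integral_exp_neg_mul_mul_rpow_Ioi (hn : 0 < n) (ha : 0 ≤ a) :
    ∫ x in Ioi a, exp (-(n * x)) * x ^ s = n ^ (-s - 1) * gammaInc (s + 1) (n * a) := by
  have hsub := integral_comp_mul_left_Ioi (fun t => t ^ s * exp (-t)) a hn
  have hscale : ∫ x in Ioi a, (n * x) ^ s * exp (-(n * x))
      = n ^ s * ∫ x in Ioi a, exp (-(n * x)) * x ^ s := by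
    rw [← integral_const_mul]
    refine setIntegral_congr_fun measurableSet_Ioi (fun x hx => ?_)
    rw [mul_rpow hn.le (ha.trans (le_of_lt hx))]
    ring
  have hpow : n ^ (-s - 1) = (n ^ s)⁻¹ * n⁻¹ := by
    rw [rpow_sub hn, rpow_neg hn.le, rpow_one, div_eq_mul_inv]
  rw [hscale, smul_eq_mul] at hsub
  rw [gammaInc, add_sub_cancel_right, hpow, mul_assoc, ← hsub, ← mul_assoc,
    inv_mul_cancel₀ (by positivity), one_mul]

theorem integral_exp_neg_mul_mul_rpow_Ioc (hn : 0 < n) (hs : -1 < s) (ha : 0 ≤ a)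
    (hab : a ≤ b) :
    ∫ x in Ioc a b, exp (-(n * x)) * x ^ s
      = n ^ (-s - 1) * (gammaInc (s + 1) (n * a) - gammaInc (s + 1) (n * b)) := by
  rw [← intervalIntegral.integral_of_le hab, ← intervalIntegral.integral_Ioi_sub_Ioi
      (integrableOn_exp_neg_mul_mul_rpow_Ioi hn hs ha) hab,
    integral_exp_neg_mul_mul_rpow_Ioi hn ha, integral_exp_neg_mul_mul_rpow_Ioi hn (ha.trans hab),
    mul_sub]

end GammaWeight

theorem integral_exp_neg_mul_mul_rpow_mul_ramp {n m ρ b c p q : ℝ} {g : ℝ → ℝ} (hn : 0 < n)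
    (hm : -1 < m) (hρ : 0 ≤ ρ) (hρb : ρ ≤ b) (hbc : b ≤ c) (hg₀ : EqOn g 0 (Ioc ρ b))
    (hg_lin : ∀ x ∈ Ioc b c, g x = p * x + q) (hg₁ : EqOn g 1 (Ioi c)) :
    ∫ x in Ioi ρ, exp (-(n * x)) * x ^ m * g x =
      gammaInc (m + 1) (n * c) * n ^ (-m - 1) +
        q * n ^ (-m - 1) * (gammaInc (m + 1) (n * b) - gammaInc (m + 1) (n * c)) +
        p * n ^ (-m - 2) * (gammaInc (m + 2) (n * b) - gammaInc (m + 2) (n * c)) := by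
  set F : ℝ → ℝ := fun x => exp (-(n * x)) * x ^ m
  set F₁ : ℝ → ℝ := fun x => exp (-(n * x)) * x ^ (m + 1)
  have hb : 0 ≤ b := hρ.trans hρb
  have hc : 0 ≤ c := hb.trans hbc
  have hF : ∀ {a}, 0 ≤ a → IntegrableOn F (Ioi a) :=
    integrableOn_exp_neg_mul_mul_rpow_Ioi hn hm
  have hF₁ : IntegrableOn F₁ (Ioc b c) :=
    (integrableOn_exp_neg_mul_mul_rpow_Ioi hn (by linarith) hb).mono_set Ioc_subset_Ioi_self
  have h_zero : EqOn (fun x => F x * g x) 0 (Ioc ρ b) := fun x hx => by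
    simp [hg₀ hx]
  have h_lin : EqOn (fun x => F x * g x) (fun x => q * F x + p * F₁ x) (Ioc b c) :=
    fun x hx => by
      simp only [F, F₁, hg_lin x hx, rpow_add_one (hb.trans_lt hx.1).ne']
      ring
  have h_one : EqOn (fun x => F x * g x) F (Ioi c) := fun x hx => by
    simp [hg₁ hx]
  have hI_lin : IntegrableOn (fun x => F x * g x) (Ioc b c) :=
    IntegrableOn.congr_fun ((((hF hb).mono_set Ioc_subset_Ioi_self).const_mul q).add
      (hF₁.const_mul p)) h_lin.symm measurableSet_Ioc
  have hI_one : IntegrableOn (fun x => F x * g x) (Ioi c) :=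
    (hF hc).congr_fun h_one.symm measurableSet_Ioi
  have hI_tail : IntegrableOn (fun x => F x * g x) (Ioi b) :=
    Ioc_union_Ioi_eq_Ioi hbc ▸ hI_lin.union hI_one
  rw [← Ioc_union_Ioi_eq_Ioi hρb, setIntegral_union Ioc_disjoint_Ioi_same measurableSet_Ioi
      (integrableOn_zero.congr_fun h_zero.symm measurableSet_Ioc) hI_tail,
    ← Ioc_union_Ioi_eq_Ioi hbc, setIntegral_union Ioc_disjoint_Ioi_same measurableSet_Ioi
      hI_lin hI_one,
    setIntegral_congr_fun measurableSet_Ioc h_zero, setIntegral_congr_fun measurableSet_Ioc h_lin,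
    setIntegral_congr_fun measurableSet_Ioi h_one,
    integral_add ((hF hb).mono_set Ioc_subset_Ioi_self |>.const_mul q) (hF₁.const_mul p),
    integral_const_mul, integral_const_mul,
    integral_exp_neg_mul_mul_rpow_Ioc hn hm hb hbc,
    integral_exp_neg_mul_mul_rpow_Ioc hn (by linarith) hb hbc,
    integral_exp_neg_mul_mul_rpow_Ioi hn hc]
  simp only [Pi.zero_apply, integral_zero]
  rw [show m + 1 + 1 = m + 2 by ring, show -(m + 1) - 1 = -m - 2 by ring]
  ring

theorem integral_semilinear_closed_form_general (α n m : ℝ) (hn : 0 < n)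
    (hm : 0 ≤ m) :
    let c₁ : ℝ := α - (Real.sqrt (2 * π) / 2) * (1 - 1 / Real.sqrt (2 * π * α ^ 2))
    let c₂ : ℝ := c₁ + Real.sqrt (2 * π)
    let ℓ : ℝ → ℝ := fun x =>
      if x < c₁ then 0
      else if x ≤ c₂ then
        (1 / Real.sqrt (2 * π)) * (x - α) +
          (1 / 2) * (1 - 1 / Real.sqrt (2 * π * α ^ 2))
      else 1
    ∀ ρ : ℝ, 0 ≤ ρ → ρ < c₂ →
      (∫ x in Set.Ioi ρ, Real.exp (-(n * x)) * x ^ m * ℓ x) =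
        gammaInc (m + 1) (n * c₂) * n ^ (-m - 1) +
          (-(α / Real.sqrt (2 * π)) +
              (1 / 2) * (1 - 1 / Real.sqrt (2 * π * α ^ 2))) * n ^ (-m - 1) *
            (gammaInc (m + 1) (n * max c₁ ρ) - gammaInc (m + 1) (n * c₂)) +
          (n ^ (-m - 2) / Real.sqrt (2 * π)) *
            (gammaInc (m + 2) (n * max c₁ ρ) - gammaInc (m + 2) (n * c₂)) := by
  intro c₁ c₂ ℓ ρ hρ hρc₂
  have hS : 0 < √(2 * π) := sqrt_pos.2 (by positivity)
  have hc₁₂ : c₁ < c₂ := lt_add_of_pos_right c₁ hS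
  -- The linear piece of `ℓ` vanishes at `c̆₁`, so `ℓ = 0` on all of `(ρ, max c̆₁ ρ]`.
  have hℓc₁ : 1 / √(2 * π) * (c₁ - α) + 1 / 2 * (1 - 1 / √(2 * π * α ^ 2)) = 0 := by
    simp only [c₁]
    field_simp
    ring
  refine (integral_exp_neg_mul_mul_rpow_mul_ramp (p := 1 / √(2 * π))
    (q := -(α / √(2 * π)) + 1 / 2 * (1 - 1 / √(2 * π * α ^ 2))) hn (by linarith) hρ
    (le_max_right c₁ ρ) (max_lt hc₁₂ hρc₂).le ?_ ?_ ?_).trans (by ring)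
  · intro x ⟨hρx, hxb⟩
    have hxc₁ : x ≤ c₁ := by simpa [hρx.not_ge] using hxb
    rcases hxc₁.lt_or_eq with hlt | rfl
    · simp [ℓ, hlt]
    · simpa [ℓ, hc₁₂.le] using hℓc₁
  · intro x ⟨hbx, hxc₂⟩
    simp only [ℓ, (max_lt_iff.1 hbx).1.not_gt, hxc₂, if_false, if_true]
    field_simp
    ring
  · intro x hx
    simp [ℓ, (hc₁₂.trans hx).not_gt, (mem_Ioi.1 hx).not_ge]

/-- Closed-form evaluation (Lemma 2 of the paper, case `ρ < c̆₂`) of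
`∫_ρ^∞ e^{−nx} x^m ℓ(x) dx`, where `ℓ` is the semi-linear approximant of
`1 − Q₁(α,x)` from Corollary 1. -/
theorem integral_semilinear_closed_form (α n m : ℝ) (hα : 0 < α) (hn : 0 < n)
    (hm : 0 ≤ m) :
    let c₁ : ℝ := α - (Real.sqrt (2 * π) / 2) * (1 - 1 / Real.sqrt (2 * π * α ^ 2))
    let c₂ : ℝ := c₁ + Real.sqrt (2 * π)
    let ℓ : ℝ → ℝ := fun x =>
      if x < c₁ then 0
      else if x ≤ c₂ then
        (1 / Real.sqrt (2 * π)) * (x - α) +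
          (1 / 2) * (1 - 1 / Real.sqrt (2 * π * α ^ 2))
      else 1
    ∀ ρ : ℝ, 0 ≤ ρ → ρ < c₂ →
      (∫ x in Set.Ioi ρ, Real.exp (-(n * x)) * x ^ m * ℓ x) =
        gammaInc (m + 1) (n * c₂) * n ^ (-m - 1) +
          (-(α / Real.sqrt (2 * π)) +
              (1 / 2) * (1 - 1 / Real.sqrt (2 * π * α ^ 2))) * n ^ (-m - 1) *
            (gammaInc (m + 1) (n * max c₁ ρ) - gammaInc (m + 1) (n * c₂)) +
          (n ^ (-m - 2) / Real.sqrt (2 * π)) *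
            (gammaInc (m + 2) (n * max c₁ ρ) - gammaInc (m + 2) (n * c₂)) :=
  integral_semilinear_closed_form_general α n m hn hm
end

section
/- For every m > 0, a > 0, n₁, n₂ ∈ ℝ and x > 0, the function F₂(y) = (1/(a m²)) · e^{−my} · ( (m n₂ − a n₂ − a m n₁) · e^{m(ay+1)/a} · E₁(m(ay+1)/a) − a · (m n₂ y + n₂ + m n₁) · log(ay + 1) − a n₂ ) is differentiable at x with derivative F₂′(x) = (n₂ x + n₁) · e^{−mx} · log(1 + ax). -/
/-! Up to the factor `e^{-my}`, the `E₁` term of `F₂` is `G(u) = e^u E₁(u)` at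
`u = m(ay+1)/a`, and `G' = G - 1/u`. In the product rule the `G` part of `G'` cancels against
the derivative `-m e^{-my}` of the exponential factor, so the exponential integral drops out and
only elementary terms remain; the `-1/u` term combines with the derivative of the logarithmic
part to give `(n₂x + n₁) e^{-mx} log(1 + ax)`. -/

open MeasureTheory Real

/-- The exponential integral function `E₁(x) = ∫_x^∞ e^{−t}/t dt`. -/
noncomputable def expE1 (x : ℝ) : ℝ := ∫ t in Set.Ioi x, Real.exp (-t) / t

open Set Filter Topology

theorem hasDerivAt_setIntegral_Ioi {E : Type*} [NormedAddCommGroup E] [NormedSpace ℝ E]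
    [CompleteSpace E] {f : ℝ → E} {c u : ℝ} (hf : IntegrableOn f (Ioi c)) (hcu : c < u)
    (hmeas : StronglyMeasurableAtFilter f (𝓝 u)) (hcont : ContinuousAt f u) :
    HasDerivAt (fun y => ∫ t in Ioi y, f t) (-f u) u := by
  have hsplit : ∀ y ∈ Ioi c, ∫ t in Ioi y, f t = (∫ t in Ioi c, f t) - ∫ t in c..y, f t :=
    fun y hy => eq_sub_of_add_eq' (intervalIntegral.integral_interval_add_Ioi hf
      (hf.mono_set (Ioi_subset_Ioi (le_of_lt hy))))
  have hint : IntervalIntegrable f volume c u :=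
    (intervalIntegrable_iff_integrableOn_Ioc_of_le hcu.le).2 (hf.mono_set Ioc_subset_Ioi_self)
  exact ((intervalIntegral.integral_hasDerivAt_right hint hmeas hcont).const_sub _)
    |>.congr_of_eventuallyEq (eventuallyEq_of_mem (Ioi_mem_nhds hcu) hsplit)

theorem integrableOn_exp_neg_div_Ioi {c : ℝ} (hc : 0 < c) :
    IntegrableOn (fun t => exp (-t) / t) (Ioi c) := by
  refine ((exp_neg_integrableOn_Ioi c one_pos).div_const c).mono' ?_ ?_
  · exact (by fun_prop : Measurable fun t : ℝ => exp (-t) / t).aestronglyMeasurable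
  · filter_upwards [ae_restrict_mem measurableSet_Ioi] with t (ht : c < t)
    have ht0 : 0 < t := hc.trans ht
    rw [norm_of_nonneg (by positivity), neg_one_mul]
    exact div_le_div_of_nonneg_left (exp_pos _).le hc ht.le

theorem hasDerivAt_expE1 {u : ℝ} (hu : 0 < u) : HasDerivAt expE1 (-(exp (-u) / u)) u := by
  have hmeas : Measurable fun t : ℝ => exp (-t) / t := by fun_prop
  exact hasDerivAt_setIntegral_Ioi (integrableOn_exp_neg_div_Ioi (half_pos hu)) (half_lt_self hu)
    hmeas.stronglyMeasurable.stronglyMeasurableAtFilter (by fun_prop (disch := exact hu.ne'))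

theorem hasDerivAt_exp_mul_expE1 {u : ℝ} (hu : 0 < u) :
    HasDerivAt (fun v => exp v * expE1 v) (exp u * expE1 u - 1 / u) u := by
  refine ((hasDerivAt_exp u).mul (hasDerivAt_expE1 hu)).congr_deriv ?_
  rw [exp_neg]
  field_simp
  ring

/-- For every `m > 0`, `a > 0`, `n₁ n₂ ∈ ℝ` and `x > 0`, the function `F₂` below
is differentiable at `x` with derivative `(n₂x + n₁) e^{−mx} log(1 + ax)`. -/
theorem hasDerivAt_F2 (m a n₁ n₂ x : ℝ) (hm : 0 < m) (ha : 0 < a) (hx : 0 < x) :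
    HasDerivAt
      (fun y : ℝ => (1 / (a * m ^ 2)) * Real.exp (-(m * y)) *
        ((m * n₂ - a * n₂ - a * m * n₁) * Real.exp (m * (a * y + 1) / a) *
            expE1 (m * (a * y + 1) / a) -
          a * (m * n₂ * y + n₂ + m * n₁) * Real.log (a * y + 1) - a * n₂))
      ((n₂ * x + n₁) * Real.exp (-(m * x)) * Real.log (1 + a * x)) x := by
  have hax : 0 < a * x + 1 := by positivity
  have hlin : HasDerivAt (fun y : ℝ => a * y + 1) a x := by
    simpa using ((hasDerivAt_id x).const_mul a).add_const 1
  have hu : HasDerivAt (fun y : ℝ => m * (a * y + 1) / a) m x :=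
    ((hlin.const_mul m).div_const a).congr_deriv (mul_div_cancel_right₀ m ha.ne')
  have hdecay : HasDerivAt (fun y : ℝ => exp (-(m * y))) (exp (-(m * x)) * -m) x := by
    simpa using ((hasDerivAt_id x).const_mul m).neg.exp
  have hpoly : HasDerivAt (fun y : ℝ => m * n₂ * y + n₂ + m * n₁) (m * n₂) x := by
    simpa using (((hasDerivAt_id x).const_mul (m * n₂)).add_const n₂).add_const (m * n₁)
  have hE := ((hasDerivAt_exp_mul_expE1 (by positivity)).comp x hu).const_mul
    (m * n₂ - a * n₂ - a * m * n₁)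
  have hL := ((hpoly.const_mul a).mul (hlin.log hax.ne')).add_const (a * n₂)
  refine ((hdecay.const_mul (1 / (a * m ^ 2))).mul (hE.sub hL)).congr_deriv ?_
    |>.congr_of_eventuallyEq (Eventually.of_forall fun y => ?_)
  · simp only [Pi.mul_apply, Pi.sub_apply, Function.comp_apply]
    rw [add_comm 1 (a * x)]
    field_simp
    ring
  · simp only [Pi.mul_apply, Pi.sub_apply, Function.comp_apply]
    ring
end

section
/- For all 0 ≤ θ₁ ≤ θ₂, m > 0 and a > 0, ∫_{θ₁}^{θ₂} e^{−mx} log(1 + ax) dx = F₁(θ₂) − F₁(θ₁), where F₁(y) = (1/m) · ( −e^{m/a} · E₁(my + m/a) − e^{−my} · log(ay + 1) ). -/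
open MeasureTheory Real

/-!
`F₁` is found by integrating by parts: `−e^{−my} log(ay + 1)/m` accounts for the logarithm, and the
remaining integral `(1/m) ∫ e^{−mx} a/(ax + 1) dx` becomes an exponential integral after the
substitution `t = mx + m/a`, since `e^{−mx} = e^{m/a} e^{−t}` and `a/(ax + 1) = m/t`.
The statement then follows from the fundamental theorem of calculus once `E₁' = −e^{−x}/x` is known.
-/

lemma continuousOn_exp_neg_div : ContinuousOn (fun t : ℝ => Real.exp (-t) / t) {0}ᶜ :=
  (Real.continuous_exp.comp continuous_neg).continuousOn.div continuousOn_id fun _ ht => ht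

lemma integrableOn_exp_neg_div_Ioi_s11 {x : ℝ} (hx : 0 < x) :
    IntegrableOn (fun t => Real.exp (-t) / t) (Set.Ioi x) := by
  have hdom : IntegrableOn (fun t : ℝ => Real.exp (-1 * t) / x) (Set.Ioi x) :=
    (exp_neg_integrableOn_Ioi x one_pos).div_const x
  refine hdom.mono' ?_ ?_
  · exact (continuousOn_exp_neg_div.mono fun t (ht : x < t) => (hx.trans ht).ne').aestronglyMeasurable
      measurableSet_Ioi
  · filter_upwards [ae_restrict_mem measurableSet_Ioi] with t (ht : x < t)
    rw [Real.norm_eq_abs, abs_div, abs_of_pos (Real.exp_pos _), abs_of_pos (hx.trans ht),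
      neg_one_mul]
    exact div_le_div_of_nonneg_left (Real.exp_pos _).le hx ht.le

lemma expE1_eq_sub_intervalIntegral {c x : ℝ} (hc : 0 < c) (hcx : c ≤ x) :
    expE1 x = expE1 c - ∫ t in c..x, Real.exp (-t) / t := by
  have hIoc : IntegrableOn (fun t => Real.exp (-t) / t) (Set.Ioc c x) :=
    (integrableOn_exp_neg_div_Ioi_s11 hc).mono_set Set.Ioc_subset_Ioi_self
  rw [expE1, expE1, intervalIntegral.integral_of_le hcx, eq_sub_iff_add_eq, add_comm,
    ← setIntegral_union (Set.Ioc_disjoint_Ioi le_rfl) measurableSet_Ioi hIoc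
      (integrableOn_exp_neg_div_Ioi_s11 (hc.trans_le hcx)),
    Set.Ioc_union_Ioi_eq_Ioi hcx]

lemma hasDerivAt_expE1_s11 {x : ℝ} (hx : 0 < x) :
    HasDerivAt expE1 (-(Real.exp (-x) / x)) x := by
  have hc : 0 < x / 2 := by positivity
  have hcx : x / 2 < x := by linarith
  have hint : IntervalIntegrable (fun t => Real.exp (-t) / t) volume (x / 2) x :=
    (continuousOn_exp_neg_div.mono fun t ht => by
      rw [Set.uIcc_of_le hcx.le] at ht
      exact (hc.trans_le ht.1).ne').intervalIntegrable
  have hcont : ContinuousAt (fun t => Real.exp (-t) / t) x :=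
    continuousOn_exp_neg_div.continuousAt (isOpen_compl_singleton.mem_nhds hx.ne')
  have hmeas : StronglyMeasurableAtFilter (fun t => Real.exp (-t) / t) (nhds x) volume :=
    continuousOn_exp_neg_div.stronglyMeasurableAtFilter isOpen_compl_singleton _ hx.ne'
  have hD := (intervalIntegral.integral_hasDerivAt_right hint hmeas hcont).const_sub
    (expE1 (x / 2))
  refine hD.congr_of_eventuallyEq ?_
  filter_upwards [eventually_gt_nhds hcx] with y hy
  exact expE1_eq_sub_intervalIntegral hc hy.le

noncomputable def expNegMulLogAntideriv (m a y : ℝ) : ℝ :=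
  (1 / m) * (-(Real.exp (m / a)) * expE1 (m * y + m / a) -
    Real.exp (-(m * y)) * Real.log (a * y + 1))

lemma exp_div_mul_exp_neg_mul_div {m a y : ℝ} (hm : m ≠ 0) (ha : a ≠ 0) :
    Real.exp (m / a) * (Real.exp (-(m * y + m / a)) / (m * y + m / a)) * m =
      Real.exp (-(m * y)) * (a / (a * y + 1)) := by
  have hexp : Real.exp (m / a) * Real.exp (-(m * y + m / a)) = Real.exp (-(m * y)) := by
    rw [← Real.exp_add]; ring_nf
  have harg : m * y + m / a = m * (a * y + 1) / a := by field_simp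
  rw [mul_div_assoc', hexp, harg]
  field_simp

lemma hasDerivAt_expNegMulLogAntideriv {m a y : ℝ} (hm : 0 < m) (ha : 0 < a)
    (hy : 0 < a * y + 1) :
    HasDerivAt (expNegMulLogAntideriv m a) (Real.exp (-(m * y)) * Real.log (1 + a * y)) y := by
  have hlin : ∀ c d : ℝ, HasDerivAt (fun y : ℝ => c * y + d) c y := fun c d => by
    simpa using ((hasDerivAt_id y).const_mul c).add_const d
  have harg : 0 < m * y + m / a := by
    rw [show m * y + m / a = m / a * (a * y + 1) by field_simp]
    positivity
  have hE := (hasDerivAt_expE1_s11 harg).comp y (hlin m (m / a))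
  have hexp : HasDerivAt (fun y : ℝ => Real.exp (-(m * y))) (Real.exp (-(m * y)) * -m) y :=
    ((hasDerivAt_id y).const_mul m).neg.exp.congr_deriv (by simp)
  have hlog : HasDerivAt (fun y : ℝ => Real.log (a * y + 1)) (a / (a * y + 1)) y :=
    (hlin a 1).log hy.ne'
  refine (((hE.const_mul (-(Real.exp (m / a)))).sub (hexp.mul hlog)).const_mul
    (1 / m)).congr_deriv ?_
  have key := exp_div_mul_exp_neg_mul_div (m := m) (y := y) hm.ne' ha.ne'
  rw [add_comm 1 (a * y)]
  linear_combination (norm := skip) (1 / m) * key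
  field_simp
  ring

lemma intervalIntegrable_exp_neg_mul_log {m a θ₁ θ₂ : ℝ} (ha : 0 ≤ a) (hθ₁ : 0 ≤ θ₁)
    (hθ : θ₁ ≤ θ₂) :
    IntervalIntegrable (fun x => Real.exp (-(m * x)) * Real.log (1 + a * x)) volume θ₁ θ₂ := by
  refine ContinuousOn.intervalIntegrable (ContinuousOn.mul (by fun_prop) ?_)
  refine ContinuousOn.log (by fun_prop) fun x hx => ?_
  rw [Set.uIcc_of_le hθ] at hx
  have : 0 ≤ x := hθ₁.trans hx.1
  positivity

/-- For all `0 ≤ θ₁ ≤ θ₂`, `m > 0` and `a > 0`,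
`∫_{θ₁}^{θ₂} e^{−mx} log(1 + ax) dx = F₁(θ₂) − F₁(θ₁)`, where
`F₁(y) = (1/m)(−e^{m/a} E₁(my + m/a) − e^{−my} log(ay + 1))`. -/
theorem integral_exp_neg_mul_log (θ₁ θ₂ m a : ℝ) (hθ₁ : 0 ≤ θ₁) (hθ : θ₁ ≤ θ₂)
    (hm : 0 < m) (ha : 0 < a) :
    let F₁ : ℝ → ℝ := fun y => (1 / m) *
      (-(Real.exp (m / a)) * expE1 (m * y + m / a) -
        Real.exp (-(m * y)) * Real.log (a * y + 1))
    (∫ x in θ₁..θ₂, Real.exp (-(m * x)) * Real.log (1 + a * x)) =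
      F₁ θ₂ - F₁ θ₁ := by
  show _ = expNegMulLogAntideriv m a θ₂ - expNegMulLogAntideriv m a θ₁
  refine intervalIntegral.integral_eq_sub_of_hasDerivAt (fun y hy => ?_)
    (intervalIntegrable_exp_neg_mul_log ha.le hθ₁ hθ)
  rw [Set.uIcc_of_le hθ] at hy
  have : 0 ≤ y := hθ₁.trans hy.1
  exact hasDerivAt_expNegMulLogAntideriv hm ha (by positivity)
end
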